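/- arXiv:1204.2025 — 2 statements merged into one kernel-verified Lean document; each statement's English description precedes it below -/
import Mathlib

section
/- A Hadamard manifold X (or more generally a proper CAT(0) space) that is uniformly visible is Gromov hyperbolic: there exists δ > 0 such that for every geodesic triangle in X, each side is contained in the δ-neighborhood of the union of the other two sides. -/
open Set

/-- `γ` is a (unit-speed) geodesic segment from `x` to `y`, parametrised on `[0, dist x y]`. -/
def IsGeodesicSegment {X : Type*} [MetricSpace X] (γ : ℝ → X) (x y : X) : Prop :=
  γ 0 = x ∧ γ (dist x y) = y ∧
    ∀ s ∈ Set.Icc (0 : ℝ) (dist x y), ∀ t ∈ Set.Icc (0 : ℝ) (dist x y),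
      dist (γ s) (γ t) = |s - t|

/-- A geodesic metric space: any two points are joined by a geodesic segment. -/
def IsGeodesicSpace (X : Type*) [MetricSpace X] : Prop :=
  ∀ x y : X, ∃ γ : ℝ → X, IsGeodesicSegment γ x y

/-- The Euclidean comparison angle at `p` of the triangle with vertices `p, x, y`,
computed from the side lengths by the law of cosines. -/
noncomputable def compAngle {X : Type*} [MetricSpace X] (p x y : X) : ℝ :=
  Real.arccos ((dist p x ^ 2 + dist p y ^ 2 - dist x y ^ 2) / (2 * dist p x * dist p y))

/-- `m` is a midpoint of `y` and `z`. -/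
def IsMidpoint {X : Type*} [MetricSpace X] (m y z : X) : Prop :=
  dist y m = dist y z / 2 ∧ dist m z = dist y z / 2

/-- The CAT(0) condition, via the midpoint comparison inequality in a geodesic space. -/
def IsCAT0 (X : Type*) [MetricSpace X] : Prop :=
  IsGeodesicSpace X ∧ ∀ x y z m : X, IsMidpoint m y z →
    dist x m ^ 2 ≤ (dist x y ^ 2 + dist x z ^ 2) / 2 - dist y z ^ 2 / 4

/-- Uniform visibility: for every `ε > 0` there is `R(ε) ≥ 0`, independent of `p`, such that any
geodesic segment staying at distance at least `R(ε)` from `p` subtends a (comparison) angle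
less than `ε` at `p`. -/
def UniformlyVisible (X : Type*) [MetricSpace X] : Prop :=
  ∀ ε > (0 : ℝ), ∃ R ≥ (0 : ℝ), ∀ (p x y : X) (γ : ℝ → X), IsGeodesicSegment γ x y →
    (∀ t ∈ Set.Icc (0 : ℝ) (dist x y), R ≤ dist p (γ t)) → compAngle p x y < ε

/-- Local visibility: the constant `R(p, ε)` may depend on the point `p`. -/
def LocallyVisible (X : Type*) [MetricSpace X] : Prop :=
  ∀ (p : X), ∀ ε > (0 : ℝ), ∃ R ≥ (0 : ℝ), ∀ (x y : X) (γ : ℝ → X), IsGeodesicSegment γ x y →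
    (∀ t ∈ Set.Icc (0 : ℝ) (dist x y), R ≤ dist p (γ t)) → compAngle p x y < ε

/-- δ-thin (Rips) triangles: each side of every geodesic triangle lies in the
δ-neighbourhood of the union of the other two sides. -/
def ThinTriangles (X : Type*) [MetricSpace X] (δ : ℝ) : Prop :=
  ∀ (x y z : X) (γxy γyz γxz : ℝ → X),
    IsGeodesicSegment γxy x y → IsGeodesicSegment γyz y z → IsGeodesicSegment γxz x z →
    ∀ t ∈ Set.Icc (0 : ℝ) (dist x z),
      ∃ s, (s ∈ Set.Icc (0 : ℝ) (dist x y) ∧ dist (γxz t) (γxy s) ≤ δ) ∨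
           (s ∈ Set.Icc (0 : ℝ) (dist y z) ∧ dist (γxz t) (γyz s) ≤ δ)

/-- The Gromov product of `x` and `y` at the basepoint `p`. -/
noncomputable def gromovProd {X : Type*} [MetricSpace X] (p x y : X) : ℝ :=
  (dist p x + dist p y - dist x y) / 2

/-! At a point `p` of the side `[x, z]` that is far from the other two sides, uniform visibility
makes both comparison angles `∠_p(x, y)` and `∠_p(y, z)` smaller than `π / 3`. By the law of
cosines this bounds `d(x, y)²` and `d(y, z)²` strictly by `a² + b² - ab` and `b² + c² - bc`,
where `a = d(p, x)`, `b = d(p, y)`, `c = d(p, z)`. The CAT(0) midpoint inequality, propagated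
along `[x, z]` by a maximum principle, says that `d(y, ·)²` is `1`-strongly convex there:
`(a + c) b² ≤ c d(x, y)² + a d(y, z)² - (a + c) a c`. The three inequalities combine to
`0 < -2abc`, so every point of `[x, z]` lies within `R(π / 3) + 1` of `[x, y] ∪ [y, z]`. -/

open Filter Topology

section MidpointConvex

theorem nonpos_of_strictMidpointConvex {h : ℝ → ℝ} {a b : ℝ} (hc : ContinuousOn h (Icc a b))
    (ha : h a ≤ 0) (hb : h b ≤ 0)
    (hmid : ∀ m r, 0 < r → a ≤ m - r → m + r ≤ b → 2 * h m < h (m - r) + h (m + r)) :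
    ∀ u ∈ Icc a b, h u ≤ 0 := by
  intro u hu
  obtain ⟨m, hm, hmax⟩ := isCompact_Icc.exists_isMaxOn ⟨u, hu⟩ hc
  refine (hmax hu).trans (not_lt.1 fun hpos => ?_)
  have ham : a < m := hm.1.lt_of_ne (by rintro rfl; linarith)
  have hmb : m < b := hm.2.lt_of_ne (by rintro rfl; linarith)
  set r := min (m - a) (b - m)
  have hr : 0 < r := lt_min (by linarith) (by linarith)
  have hra : r ≤ m - a := min_le_left _ _
  have hrb : r ≤ b - m := min_le_right _ _
  have hleft : h (m - r) ≤ h m := hmax ⟨by linarith, by linarith⟩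
  have hright : h (m + r) ≤ h m := hmax ⟨by linarith, by linarith⟩
  linarith [hmid m r hr (by linarith) (by linarith)]

theorem nonpos_of_midpointConvex {h : ℝ → ℝ} {a b : ℝ} (hc : ContinuousOn h (Icc a b))
    (ha : h a ≤ 0) (hb : h b ≤ 0)
    (hmid : ∀ m r, 0 < r → a ≤ m - r → m + r ≤ b → 2 * h m ≤ h (m - r) + h (m + r)) :
    ∀ u ∈ Icc a b, h u ≤ 0 := by
  -- perturb by the strictly convex `η (v - a) (v - b)`, which vanishes at the endpoints
  have hperturbed : ∀ η > (0 : ℝ), ∀ u ∈ Icc a b, h u + η * ((u - a) * (u - b)) ≤ 0 := by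
    intro η hη
    refine nonpos_of_strictMidpointConvex (by fun_prop) (by simpa using ha) (by simpa using hb) ?_
    intro m r hr hmr hmr'
    nlinarith [hmid m r hr hmr hmr', mul_pos hη (mul_pos hr hr)]
  intro u hu
  have hlim : Tendsto (fun η : ℝ => h u + η * ((u - a) * (u - b))) (𝓝[>] 0) (𝓝 (h u)) := by
    have hcont : Continuous fun η : ℝ => h u + η * ((u - a) * (u - b)) := by fun_prop
    simpa using tendsto_nhdsWithin_of_tendsto_nhds (hcont.tendsto 0)
  exact le_of_tendsto hlim (eventually_nhdsWithin_of_forall fun η hη => hperturbed η hη u hu)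

end MidpointConvex

section Geodesic

variable {X : Type*} [MetricSpace X] {γ : ℝ → X} {x y : X}

theorem IsGeodesicSegment.dist_left (hγ : IsGeodesicSegment γ x y) {t : ℝ}
    (ht : t ∈ Icc 0 (dist x y)) : dist (γ t) x = t := by
  rw [← hγ.1, hγ.2.2 t ht 0 ⟨le_rfl, dist_nonneg⟩, sub_zero, abs_of_nonneg ht.1]

theorem IsGeodesicSegment.dist_right (hγ : IsGeodesicSegment γ x y) {t : ℝ}
    (ht : t ∈ Icc 0 (dist x y)) : dist (γ t) y = dist x y - t := by
  conv_lhs => rw [← hγ.2.1]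
  rw [hγ.2.2 t ht _ ⟨dist_nonneg, le_rfl⟩, abs_of_nonpos (by linarith [ht.2]), neg_sub]

theorem IsGeodesicSegment.continuousOn (hγ : IsGeodesicSegment γ x y) :
    ContinuousOn γ (Icc 0 (dist x y)) := by
  refine (LipschitzOnWith.of_dist_le_mul (K := 1) fun s hs t ht => ?_).continuousOn
  rw [hγ.2.2 s hs t ht, NNReal.coe_one, one_mul, Real.dist_eq]

theorem IsGeodesicSegment.isMidpoint (hγ : IsGeodesicSegment γ x y) {m r : ℝ} (hr : 0 ≤ r)
    (hmr : 0 ≤ m - r) (hmr' : m + r ≤ dist x y) :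
    IsMidpoint (γ m) (γ (m - r)) (γ (m + r)) ∧ dist (γ (m - r)) (γ (m + r)) = 2 * r := by
  have mem : ∀ {s}, m - r ≤ s → s ≤ m + r → s ∈ Icc 0 (dist x y) :=
    fun h₁ h₂ => ⟨hmr.trans h₁, h₂.trans hmr'⟩
  have hlong : dist (γ (m - r)) (γ (m + r)) = 2 * r := by
    rw [hγ.2.2 _ (mem le_rfl (by linarith)) _ (mem (by linarith) le_rfl),
      abs_of_nonpos (by linarith)]
    ring
  refine ⟨⟨?_, ?_⟩, hlong⟩
  · rw [hγ.2.2 _ (mem le_rfl (by linarith)) _ (mem (by linarith) (by linarith)),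
      abs_of_nonpos (by linarith), hlong]
    ring
  · rw [hγ.2.2 _ (mem (by linarith) (by linarith)) _ (mem (by linarith) le_rfl),
      abs_of_nonpos (by linarith), hlong]
    ring

end Geodesic

section CAT0

variable {X : Type*} [MetricSpace X]

theorem sq_dist_lt_of_compAngle_lt_pi_div_three {p x y : X} (hx : 0 < dist p x)
    (hy : 0 < dist p y) (h : compAngle p x y < Real.pi / 3) :
    dist x y ^ 2 < dist p x ^ 2 + dist p y ^ 2 - dist p x * dist p y := by
  have hden : 0 < 2 * dist p x * dist p y := by positivity
  have hcos :
      1 / 2 < (dist p x ^ 2 + dist p y ^ 2 - dist x y ^ 2) / (2 * dist p x * dist p y) := by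
    by_contra! hle
    refine h.not_ge ?_
    calc Real.pi / 3 = Real.arccos (1 / 2) := by
          rw [← Real.cos_pi_div_three, Real.arccos_cos (by positivity) (by linarith [Real.pi_pos])]
      _ ≤ compAngle p x y := Real.arccos_le_arccos hle
  rw [lt_div_iff₀ hden] at hcos
  linarith

/-- The `1`-strong convexity of `d(q, ·)²` along `γ`, multiplied through by `dist x y`. -/
theorem IsCAT0.sq_dist_le (hX : IsCAT0 X) {γ : ℝ → X} {x y : X} (hγ : IsGeodesicSegment γ x y)
    (q : X) {t : ℝ} (ht : t ∈ Icc 0 (dist x y)) :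
    dist x y * dist q (γ t) ^ 2 ≤
      (dist x y - t) * dist q x ^ 2 + t * dist q y ^ 2 - dist x y * (t * (dist x y - t)) := by
  set L := dist x y
  have hL : 0 ≤ L := dist_nonneg
  suffices ∀ v ∈ Icc 0 L, L * dist q (γ v) ^ 2 - ((L - v) * dist q x ^ 2 + v * dist q y ^ 2)
      + L * (v * (L - v)) ≤ 0 by linarith [this t ht]
  refine nonpos_of_midpointConvex ?_ (by simp [hγ.1]) (by simp [show γ L = y from hγ.2.1]) ?_
  · have := (continuous_const.dist continuous_id : Continuous fun p : X => dist q p)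
      |>.comp_continuousOn hγ.continuousOn
    fun_prop
  · intro m r hr hmr hmr'
    obtain ⟨hmid, hlong⟩ := hγ.isMidpoint hr.le hmr hmr'
    have hcat := hX.2 q _ _ _ hmid
    rw [hlong] at hcat
    nlinarith [mul_le_mul_of_nonneg_left hcat hL]

theorem IsCAT0.pi_div_three_le_max_compAngle (hX : IsCAT0 X) {γ : ℝ → X} {x z : X}
    (hγ : IsGeodesicSegment γ x z) (y : X) {t : ℝ} (ht : t ∈ Ioo 0 (dist x z)) (hy : γ t ≠ y) :
    Real.pi / 3 ≤ max (compAngle (γ t) x y) (compAngle (γ t) y z) := by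
  by_contra! hlt
  obtain ⟨hxy, hyz⟩ := max_lt_iff.1 hlt
  have ht' : t ∈ Icc 0 (dist x z) := Ioo_subset_Icc_self ht
  have hpx : dist (γ t) x = t := hγ.dist_left ht'
  have hpz : dist (γ t) z = dist x z - t := hγ.dist_right ht'
  have ha : 0 < dist (γ t) x := by rw [hpx]; exact ht.1
  have hb : 0 < dist (γ t) y := dist_pos.2 hy
  have hc : 0 < dist (γ t) z := by rw [hpz]; exact sub_pos.2 ht.2
  have hbound_xy := sq_dist_lt_of_compAngle_lt_pi_div_three ha hb hxy
  have hbound_yz := sq_dist_lt_of_compAngle_lt_pi_div_three hb hc hyz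
  have hconvex := hX.sq_dist_le hγ y ht'
  rw [dist_comm y (γ t), dist_comm y x] at hconvex
  rw [hpx] at ha hbound_xy
  rw [hpz] at hc hbound_yz
  nlinarith [mul_lt_mul_of_pos_left hbound_xy hc, mul_lt_mul_of_pos_left hbound_yz ha,
    mul_pos (mul_pos ha hb) hc]

end CAT0

theorem uniformly_visible_implies_hyperbolic_general (X : Type*) [MetricSpace X]
    (hCAT : IsCAT0 X) (hvis : UniformlyVisible X) :
    ∃ δ > (0 : ℝ), ThinTriangles X δ := by
  obtain ⟨R, hR0, hR⟩ := hvis (Real.pi / 3) (by positivity)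
  refine ⟨R + 1, by linarith, fun x y z γxy γyz γxz hxy hyz hxz t ht => ?_⟩
  by_contra! hfar
  have hfar_xy : ∀ s ∈ Icc 0 (dist x y), R + 1 < dist (γxz t) (γxy s) := fun s hs => (hfar s).1 hs
  have hfar_yz : ∀ s ∈ Icc 0 (dist y z), R + 1 < dist (γxz t) (γyz s) := fun s hs => (hfar s).2 hs
  have hpx : R + 1 < t := hxz.dist_left ht ▸ hxy.1 ▸ hfar_xy 0 ⟨le_rfl, dist_nonneg⟩
  have hpy : R + 1 < dist (γxz t) y := hxy.2.1 ▸ hfar_xy _ ⟨dist_nonneg, le_rfl⟩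
  have hpz : R + 1 < dist x z - t := hxz.dist_right ht ▸ hyz.2.1 ▸ hfar_yz _ ⟨dist_nonneg, le_rfl⟩
  have hangle_xy := hR _ x y γxy hxy fun s hs => (hfar_xy s hs).le.trans' (by linarith)
  have hangle_yz := hR _ y z γyz hyz fun s hs => (hfar_yz s hs).le.trans' (by linarith)
  have hne : γxz t ≠ y := dist_pos.1 (by linarith)
  have hmax := hCAT.pi_div_three_le_max_compAngle hxz y ⟨by linarith, by linarith⟩ hne
  exact hmax.not_gt (max_lt hangle_xy hangle_yz)

/-- a proper CAT(0) space (in particular a Hadamard manifold) which is uniformly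
visible is Gromov hyperbolic: there is `δ > 0` such that all geodesic triangles are δ-thin. -/
theorem uniformly_visible_implies_hyperbolic (X : Type*) [MetricSpace X] [ProperSpace X]
    (hCAT : IsCAT0 X) (hvis : UniformlyVisible X) :
    ∃ δ > (0 : ℝ), ThinTriangles X δ :=
  uniformly_visible_implies_hyperbolic_general X hCAT hvis
end

section
/- Let X be a locally visible CAT(0) space admitting a cocompact isometric group action (i.e., there is a group acting by isometries with compact quotient). Then X is uniformly visible. -/
open Set

/-! The comparison angle at `p` is governed by Gromov products at the endpoints:
`1 - cos ∠ₚ(x, y) = 2 (p|y)ₓ (p|x)_y / (|px| |py|)`, and these products are 1-Lipschitz in `p`.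
So if the endpoints are far from `p`, moving the basepoint by at most `1` changes the numerator
by `O(|px| + |py|)`, which is negligible against the denominator: a small angle at `q` forces a
small angle at every `p` with `|pq| ≤ 1`. By cocompactness every basepoint is carried by an
isometry to within distance `1` of one of finitely many points `q`, and the largest of their
local visibility radii works for every basepoint. -/

open Real Set

lemma IsCompact.exists_forall_exists_dist_lt_and_le {X : Type*} [PseudoMetricSpace X]
    {K : Set X} (hK : IsCompact K) (f : X → ℝ) {δ : ℝ} (hδ : 0 < δ) :
    ∃ M, ∀ k ∈ K, ∃ q, dist k q < δ ∧ f q ≤ M := by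
  obtain ⟨t, ht⟩ := hK.elim_finite_subcover (fun q => Metric.ball q δ)
    (fun _ => Metric.isOpen_ball) fun k _ => mem_iUnion.2 ⟨k, Metric.mem_ball_self hδ⟩
  obtain ⟨M, hM⟩ := (t.image f).exists_le
  refine ⟨M, fun k hk => ?_⟩
  obtain ⟨q, hqt, hkq⟩ := mem_iUnion₂.1 (ht hk)
  exact ⟨q, hkq, hM _ (Finset.mem_image_of_mem f hqt)⟩

section Visibility

variable {X : Type*} [MetricSpace X]

lemma gromovProd_nonneg (p x y : X) : 0 ≤ gromovProd p x y := by
  unfold gromovProd; linarith [dist_triangle x p y, dist_comm x p]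

lemma gromovProd_le_dist_left (p x y : X) : gromovProd p x y ≤ dist p x := by
  unfold gromovProd; linarith [dist_triangle p x y]

lemma gromovProd_le_add_dist (p x x' y : X) :
    gromovProd p x y ≤ gromovProd p x' y + dist x x' := by
  unfold gromovProd; linarith [dist_triangle p x' x, dist_triangle x' x y, dist_comm x x']

lemma one_sub_cos_compAngle (p x y : X) (hx : 0 < dist p x) (hy : 0 < dist p y) :
    1 - cos (compAngle p x y) =
      2 * gromovProd x p y * gromovProd y p x / (dist p x * dist p y) := by
  have hxy := dist_triangle x p y
  have hpx := dist_triangle p y x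
  have hpy := dist_triangle p x y
  rw [dist_comm x p] at hxy
  rw [dist_comm y x] at hpx
  rw [compAngle, cos_arccos, gromovProd, gromovProd, dist_comm x p, dist_comm y p, dist_comm y x]
  · field_simp
    ring
  · rw [le_div_iff₀ (by positivity)]; nlinarith
  · rw [div_le_iff₀ (by positivity)]; nlinarith

lemma compAngle_lt_iff {p x y : X} {ε : ℝ} (hε₀ : 0 ≤ ε) (hεπ : ε ≤ π)
    (hx : 0 < dist p x) (hy : 0 < dist p y) :
    compAngle p x y < ε ↔
      2 * gromovProd x p y * gromovProd y p x < (1 - cos ε) * (dist p x * dist p y) := by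
  have hmem : compAngle p x y ∈ Icc 0 π := ⟨arccos_nonneg _, arccos_le_pi _⟩
  rw [← strictAntiOn_cos.lt_iff_gt ⟨hε₀, hεπ⟩ hmem, ← div_lt_iff₀ (by positivity),
    ← one_sub_cos_compAngle p x y hx hy]
  constructor <;> intro h <;> linarith

/-- `arccos ((1 + cos ε) / 2)` is the angle `ε'` with `1 - cos ε' = (1 - cos ε) / 2`. -/
lemma compAngle_lt_of_dist_le_one {p q x y : X} {ε R : ℝ} (hε₀ : 0 < ε) (hεπ : ε ≤ π)
    (hR : 16 ≤ R * (1 - cos ε)) (hpq : dist p q ≤ 1) (hx : R ≤ dist p x) (hy : R ≤ dist p y)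
    (hq : compAngle q x y < arccos ((1 + cos ε) / 2)) :
    compAngle p x y < ε := by
  have hcos : cos ε < 1 := by simpa using cos_lt_cos_of_nonneg_of_le_pi le_rfl hεπ hε₀
  have hR8 : 8 ≤ R := by nlinarith [neg_one_le_cos ε]
  have hqx : dist q x ≤ dist p x + 1 := by linarith [dist_triangle q p x, dist_comm q p]
  have hqy : dist q y ≤ dist p y + 1 := by linarith [dist_triangle q p y, dist_comm q p]
  have hxq : dist p x - 1 ≤ dist q x := by linarith [dist_triangle p q x]
  have hyq : dist p y - 1 ≤ dist q y := by linarith [dist_triangle p q y]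
  rw [compAngle_lt_iff (arccos_nonneg _) (arccos_le_pi _) (by linarith) (by linarith),
    cos_arccos (by linarith [neg_one_le_cos ε]) (by linarith)] at hq
  rw [compAngle_lt_iff hε₀.le hεπ (by linarith) (by linarith)]
  have hgx : gromovProd x p y ≤ gromovProd x q y + 1 := by
    linarith [gromovProd_le_add_dist x p q y]
  have hgy : gromovProd y p x ≤ gromovProd y q x + 1 := by
    linarith [gromovProd_le_add_dist y p q x]
  have hgx' : gromovProd x q y ≤ dist q x := dist_comm x q ▸ gromovProd_le_dist_left x q y
  have hgy' : gromovProd y q x ≤ dist q y := dist_comm y q ▸ gromovProd_le_dist_left y q x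
  have hsa : 16 ≤ (1 - cos ε) * dist p x := by nlinarith
  have hsb : 16 ≤ (1 - cos ε) * dist p y := by nlinarith
  calc 2 * gromovProd x p y * gromovProd y p x
      ≤ 2 * (gromovProd x q y + 1) * (gromovProd y q x + 1) := by
        gcongr <;> linarith [gromovProd_nonneg y p x, gromovProd_nonneg x p y]
    _ < (1 - cos ε) / 2 * (dist q x * dist q y) + 2 * dist q x + 2 * dist q y + 2 := by
        linarith
    _ ≤ (1 - cos ε) * (dist p x * dist p y) := by
        nlinarith [mul_le_mul hqx hqy dist_nonneg (by linarith)]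

/-- `LocallyVisible X` reads `∀ p, ∀ ε > 0, ∃ R ≥ 0, VisibleFrom p ε R`, and `UniformlyVisible X`
is the same with `∃ R` moved in front of `∀ p`. -/
def VisibleFrom (p : X) (ε R : ℝ) : Prop :=
  ∀ (x y : X) (γ : ℝ → X), IsGeodesicSegment γ x y →
    (∀ t ∈ Icc (0 : ℝ) (dist x y), R ≤ dist p (γ t)) → compAngle p x y < ε

lemma VisibleFrom.mono_angle {p : X} {ε ε' R : ℝ} (h : VisibleFrom p ε R) (hε : ε ≤ ε') :
    VisibleFrom p ε' R :=
  fun x y γ hγ hfar => (h x y γ hγ hfar).trans_le hε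

lemma VisibleFrom.of_dist_le_one {p q : X} {ε R₀ R : ℝ}
    (hq : VisibleFrom q (arccos ((1 + cos ε) / 2)) R₀) (hε₀ : 0 < ε) (hεπ : ε ≤ π)
    (hpq : dist p q ≤ 1) (hR₀ : R₀ + 1 ≤ R) (hR : 16 ≤ R * (1 - cos ε)) :
    VisibleFrom p ε R := by
  intro x y γ hγ hfar
  have hx : R ≤ dist p x := hγ.1 ▸ hfar 0 ⟨le_rfl, dist_nonneg⟩
  have hy : R ≤ dist p y := hγ.2.1 ▸ hfar _ ⟨dist_nonneg, le_rfl⟩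
  refine compAngle_lt_of_dist_le_one hε₀ hεπ hR hpq hx hy (hq x y γ hγ fun t ht => ?_)
  linarith [hfar t ht, dist_triangle p q (γ t)]

end Visibility

section Isometry

variable {X Y : Type*} [MetricSpace X] [MetricSpace Y] {f : X → Y}

lemma IsGeodesicSegment.comp_isometry {γ : ℝ → X} {x y : X} (hγ : IsGeodesicSegment γ x y)
    (hf : Isometry f) : IsGeodesicSegment (f ∘ γ) (f x) (f y) := by
  obtain ⟨h0, h1, hdist⟩ := hγ
  rw [IsGeodesicSegment, hf.dist_eq]
  refine ⟨congrArg f h0, congrArg f h1, fun s hs t ht => ?_⟩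
  rw [Function.comp_apply, Function.comp_apply, hf.dist_eq, hdist s hs t ht]

lemma compAngle_isometry (hf : Isometry f) (p x y : X) :
    compAngle (f p) (f x) (f y) = compAngle p x y := by
  simp only [compAngle, hf.dist_eq]

lemma VisibleFrom.of_isometry {p : X} {ε R : ℝ} (hf : Isometry f) (h : VisibleFrom (f p) ε R) :
    VisibleFrom p ε R := by
  intro x y γ hγ hfar
  rw [← compAngle_isometry hf]
  refine h (f x) (f y) (f ∘ γ) (hγ.comp_isometry hf) fun t ht => ?_
  rw [Function.comp_apply, hf.dist_eq]
  exact hfar t (hf.dist_eq x y ▸ ht)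

end Isometry

theorem cocompact_locally_visible_implies_uniformly_visible_general (X : Type*) [MetricSpace X]
    (Γ : Type*) [Group Γ] [MulAction Γ X]
    (hiso : ∀ g : Γ, Isometry fun x : X => g • x)
    (hcocompact : ∃ K : Set X, IsCompact K ∧ ∀ x : X, ∃ g : Γ, g • x ∈ K)
    (hloc : LocallyVisible X) :
    UniformlyVisible X := by
  intro ε hε
  -- comparison angles are at most `π`, so it suffices to treat `ε ≤ π`
  set ε₀ := min ε π
  have hε₀ : 0 < ε₀ := lt_min hε pi_pos
  have hcos : 0 < 1 - cos ε₀ := by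
    linarith [cos_lt_cos_of_nonneg_of_le_pi le_rfl (min_le_right ε π) hε₀, cos_zero]
  obtain ⟨K, hK, hKΓ⟩ := hcocompact
  choose R₀ _ hR₀ using fun q => hloc q _ (arccos_pos.2 (by linarith : (1 + cos ε₀) / 2 < 1))
  obtain ⟨M, hM⟩ := hK.exists_forall_exists_dist_lt_and_le R₀ one_pos
  set R := max (M + 1) (16 / (1 - cos ε₀))
  have hR : 16 ≤ R * (1 - cos ε₀) := (div_le_iff₀ hcos).1 (le_max_right _ _)
  refine ⟨R, le_max_of_le_right (by positivity), fun p => ?_⟩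
  obtain ⟨g, hg⟩ := hKΓ p
  obtain ⟨q, hpq, hMq⟩ := hM _ hg
  have hR₀q : R₀ q + 1 ≤ R := by linarith [le_max_left (M + 1) (16 / (1 - cos ε₀))]
  have hvis : VisibleFrom (g • p) ε₀ R :=
    VisibleFrom.of_dist_le_one (hR₀ q) hε₀ (min_le_right _ _) hpq.le hR₀q hR
  exact (hvis.of_isometry (hiso g)).mono_angle (min_le_left _ _)

/-- a locally visible CAT(0) space admitting a cocompact isometric group action is
uniformly visible. -/
theorem cocompact_locally_visible_implies_uniformly_visible (X : Type*) [MetricSpace X]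
    (Γ : Type*) [Group Γ] [MulAction Γ X]
    (hiso : ∀ g : Γ, Isometry fun x : X => g • x)
    (hcocompact : ∃ K : Set X, IsCompact K ∧ ∀ x : X, ∃ g : Γ, g • x ∈ K)
    (hCAT : IsCAT0 X) (hloc : LocallyVisible X) :
    UniformlyVisible X :=
  cocompact_locally_visible_implies_uniformly_visible_general X Γ hiso hcocompact hloc
end
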